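/- arXiv:1709.04774 — 6 statements merged into one kernel-verified Lean document; each statement's English description precedes it below -/
import Mathlib

section
/- Let D be a division ring, φ a ring automorphism of D, and K = {a ∈ D : φ(a) = a} the fixed division subring. Suppose the center k of K is contained in the center of D. If φ has infinite order, then the center of the skew Laurent series division ring D((λ, φ)) is k. -/
/-!
Comparing coefficients of `x * (d λ^m)` and `(d λ^m) * x` for a central `x = ∑ cⱼ λʲ` gives
`cⱼ φʲ(d) = d φᵐ(cⱼ)` for all `j, m, d`. Taking `m = 1, d = 1` shows `cⱼ ∈ K`, and `m = 0`
shows `cⱼ φʲ(d) = d cⱼ`; in particular `cⱼ` commutes with `K`, so `cⱼ ∈ k ⊆ Z(D)` and then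
`cⱼ ≠ 0` forces `φʲ = 1`, i.e. `j = 0` since `φ` has infinite order.
-/

open HahnSeries

theorem RingEquiv.zpow_apply_eq_self {D : Type*} [DivisionRing D] {φ : D ≃+* D} {a : D}
    (h : φ a = a) (n : ℤ) : (φ ^ n) a = a :=
  Subgroup.zpow_mem (MulAction.stabilizer (RingAut D) a) h n

theorem RingEquiv.eq_one_of_mul_apply_eq_mul {D : Type*} [DivisionRing D] {ψ : D ≃+* D} {c : D}
    (hc : c ≠ 0) (hcen : c ∈ Subring.center D) (h : ∀ d, c * ψ d = d * c) : ψ = 1 := by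
  ext d
  exact mul_left_cancel₀ hc (by rw [h d, Subring.mem_center_iff.mp hcen d]; rfl)

section SkewConvolution

variable {D : Type*} [DivisionRing D] {φ : D ≃+* D} {L : Type*} [DivisionRing L]
  {e : L ≃+ HahnSeries ℤ D}

def IsSkewConvolution (φ : D ≃+* D) (e : L ≃+ HahnSeries ℤ D) : Prop :=
  ∀ x y : L, ∀ n : ℤ,
    (e (x * y)).coeff n = ∑ᶠ i : ℤ, (e x).coeff i * (φ ^ i) ((e y).coeff (n - i))

theorem IsSkewConvolution.coeff_mul_single (hmul : IsSkewConvolution φ e) (x : L) {y : L}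
    {m : ℤ} {d : D} (hy : e y = single m d) (n : ℤ) :
    (e (x * y)).coeff n = (e x).coeff (n - m) * (φ ^ (n - m)) d := by
  rw [hmul x y n, finsum_eq_single _ (n - m) fun i hi => ?_]
  · rw [hy, sub_sub_cancel, coeff_single_same]
  · rw [hy, coeff_single_of_ne (by omega), map_zero, mul_zero]

theorem IsSkewConvolution.coeff_single_mul (hmul : IsSkewConvolution φ e) (x : L) {y : L}
    {m : ℤ} {d : D} (hy : e y = single m d) (n : ℤ) :
    (e (y * x)).coeff n = d * (φ ^ m) ((e x).coeff (n - m)) := by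
  rw [hmul y x n, finsum_eq_single _ m fun i hi => ?_]
  · rw [hy, coeff_single_same]
  · rw [hy, coeff_single_of_ne hi, zero_mul]

theorem IsSkewConvolution.coeff_mul_apply_eq_of_mem_center (hmul : IsSkewConvolution φ e)
    {x : L} (hx : x ∈ Subring.center L) (j m : ℤ) (d : D) :
    (e x).coeff j * (φ ^ j) d = d * (φ ^ m) ((e x).coeff j) := by
  obtain ⟨y, hy⟩ := e.surjective (single m d)
  have h := congrArg (fun z => (e z).coeff (j + m)) (Subring.mem_center_iff.mp hx y)
  simp only [hmul.coeff_mul_single x hy, hmul.coeff_single_mul x hy, add_sub_cancel_right] at h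
  exact h.symm

theorem IsSkewConvolution.mem_center_of_eq_C (hmul : IsSkewConvolution φ e) {x : L} {a : D}
    (hfix : φ a = a) (ha : a ∈ Subring.center D) (hx : e x = C a) : x ∈ Subring.center L := by
  refine Subring.mem_center_iff.mpr fun y => e.injective <| HahnSeries.ext <| funext fun n => ?_
  rw [C_apply] at hx
  rw [hmul.coeff_mul_single y hx, hmul.coeff_single_mul y hx, sub_zero, zpow_zero,
    RingEquiv.zpow_apply_eq_self hfix, Subring.mem_center_iff.mp ha]
  rfl

end SkewConvolution

theorem center_skewLaurentSeries_of_infinite_order_general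
    (D : Type*) [DivisionRing D] (φ : D ≃+* D)
    (L : Type*) [DivisionRing L] (e : L ≃+ HahnSeries ℤ D)
    (hmul : ∀ x y : L, ∀ n : ℤ,
      (e (x * y)).coeff n = ∑ᶠ i : ℤ, (e x).coeff i * (φ ^ i) ((e y).coeff (n - i)))
    (hkF : ∀ a : D, φ a = a → (∀ b : D, φ b = b → a * b = b * a) →
      a ∈ Subring.center D)
    (hord : ¬ IsOfFinOrder φ) :
    ∀ x : L, x ∈ Subring.center L ↔
      ∃ a : D, φ a = a ∧ (∀ b : D, φ b = b → a * b = b * a) ∧ e x = HahnSeries.C a := by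
  have hmul : IsSkewConvolution φ e := hmul
  intro x
  refine ⟨fun hx => ?_, fun ⟨a, hfix, hcomm, hx⟩ =>
    hmul.mem_center_of_eq_C hfix (hkF a hfix hcomm) hx⟩
  have key := hmul.coeff_mul_apply_eq_of_mem_center hx
  have hfix (j : ℤ) : φ ((e x).coeff j) = (e x).coeff j := by simpa using (key j 1 1).symm
  have hrel (j : ℤ) (d : D) : (e x).coeff j * (φ ^ j) d = d * (e x).coeff j := by
    simpa using key j 0 d
  have hcomm (j : ℤ) (b : D) (hb : φ b = b) : (e x).coeff j * b = b * (e x).coeff j := by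
    simpa [RingEquiv.zpow_apply_eq_self hb] using hrel j b
  have hzero (j : ℤ) (hj : j ≠ 0) : (e x).coeff j = 0 := by
    by_contra hc
    have hφj := RingEquiv.eq_one_of_mul_apply_eq_mul hc (hkF _ (hfix j) (hcomm j)) (hrel j)
    exact hj (injective_zpow_iff_not_isOfFinOrder.mpr hord (hφj.trans (zpow_zero φ).symm))
  refine ⟨(e x).coeff 0, hfix 0, hcomm 0, HahnSeries.ext <| funext fun n => ?_⟩
  rw [C_apply, coeff_single]
  split_ifs with hn
  · rw [hn]
  · exact hzero n hn

/-- Let `D` be a division ring, `φ` a ring automorphism of `D`, with the center of the fixed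
division subring `K = {a | φ a = a}` contained in the center of `D`.  The skew Laurent series
division ring `D((λ, φ))` is presented as a division ring `L` additively identified with
`HahnSeries ℤ D` whose multiplication is the `φ`-twisted convolution.  If `φ` has infinite
order, then the center of `L` is `k = Z(K)` (embedded as constant series). -/
theorem center_skewLaurentSeries_of_infinite_order
    (D : Type*) [DivisionRing D] (φ : D ≃+* D)
    (L : Type*) [DivisionRing L] (e : L ≃+ HahnSeries ℤ D)
    (hmul : ∀ x y : L, ∀ n : ℤ,
      (e (x * y)).coeff n = ∑ᶠ i : ℤ, (e x).coeff i * (φ ^ i) ((e y).coeff (n - i)))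
    (hone : e 1 = HahnSeries.C (1 : D))
    (hkF : ∀ a : D, φ a = a → (∀ b : D, φ b = b → a * b = b * a) →
      a ∈ Subring.center D)
    (hord : ¬ IsOfFinOrder φ) :
    ∀ x : L, x ∈ Subring.center L ↔
      ∃ a : D, φ a = a ∧ (∀ b : D, φ b = b → a * b = b * a) ∧ e x = HahnSeries.C a :=
  center_skewLaurentSeries_of_infinite_order_general D φ L e hmul hkF hord
end

section
/- Let D be a division ring, φ a ring automorphism of D, and K = {a ∈ D : φ(a) = a}. Suppose the center k of K is contained in the center of D. If φ has finite order s, then the center of D((λ, φ)) is k((λˢ)), the set of Laurent series in λˢ with coefficients in k. -/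
/-!
Testing a series `x` against monomials `b λᵐ` shows that `x` is central iff each coefficient
`xₙ` is `φ`-fixed and satisfies `xₙ φⁿ(b) = b xₙ` for all `b`; no condition on `φ` is needed for
this. For a nonzero `xₙ`, taking `b` fixed makes `xₙ` central in `K`, hence in `D`, and then
cancelling `xₙ` gives `φⁿ = 1`, i.e. `s ∣ n`.
-/

theorem RingEquiv.zpow_apply_eq_self_s3 {R : Type*} [Semiring R] {ψ : R ≃+* R} {a : R}
    (h : ψ a = a) (i : ℤ) : (ψ ^ i) a = a :=
  zpow_mem (show ψ ∈ MulAction.stabilizer (RingAut R) a from h) i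

theorem fixed_and_twistedCommute_iff {D : Type*} [DivisionRing D] {φ : D ≃+* D}
    (hkF : ∀ a : D, φ a = a → (∀ b : D, φ b = b → a * b = b * a) → a ∈ Subring.center D)
    (c : D) (n : ℤ) :
    (φ c = c ∧ ∀ b : D, c * (φ ^ n) b = b * c) ↔
      (φ c = c ∧ ∀ b : D, φ b = b → c * b = b * c) ∧ (c ≠ 0 → φ ^ n = 1) := by
  constructor
  · rintro ⟨hfix, htwist⟩
    have hcomm : ∀ b : D, φ b = b → c * b = b * c := fun b hb => by
      simpa only [RingEquiv.zpow_apply_eq_self_s3 hb] using htwist b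
    refine ⟨⟨hfix, hcomm⟩, fun hc => RingEquiv.ext fun b => mul_left_cancel₀ hc ?_⟩
    rw [htwist, Subring.mem_center_iff.mp (hkF c hfix hcomm) b]
    rfl
  · rintro ⟨⟨hfix, hcomm⟩, hpow⟩
    refine ⟨hfix, fun b => ?_⟩
    rcases eq_or_ne c 0 with rfl | hc
    · simp
    rw [hpow hc]
    exact (Subring.mem_center_iff.mp (hkF c hfix hcomm) b).symm

section SkewConvolution

variable {D L : Type*} [DivisionRing D] [DivisionRing L] {φ : D ≃+* D} {e : L ≃+ HahnSeries ℤ D}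

def IsSkewLaurentMul (φ : D ≃+* D) (e : L ≃+ HahnSeries ℤ D) : Prop :=
  ∀ x y : L, ∀ n : ℤ,
    (e (x * y)).coeff n = ∑ᶠ i : ℤ, (e x).coeff i * (φ ^ i) ((e y).coeff (n - i))

theorem coeff_mul_single (hmul : IsSkewLaurentMul φ e) (x : L) (m k : ℤ) (b : D) :
    (e (x * e.symm (HahnSeries.single m b))).coeff (k + m) = (e x).coeff k * (φ ^ k) b := by
  rw [hmul, finsum_eq_single _ k, e.apply_symm_apply, add_sub_cancel_left,
    HahnSeries.coeff_single_same]
  intro i hi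
  rw [e.apply_symm_apply, HahnSeries.coeff_single_of_ne (by omega), map_zero, mul_zero]

theorem coeff_single_mul (hmul : IsSkewLaurentMul φ e) (x : L) (m k : ℤ) (b : D) :
    (e (e.symm (HahnSeries.single m b) * x)).coeff (k + m) = b * (φ ^ m) ((e x).coeff k) := by
  rw [hmul, finsum_eq_single _ m, e.apply_symm_apply, HahnSeries.coeff_single_same,
    add_sub_cancel_right]
  intro i hi
  rw [e.apply_symm_apply, HahnSeries.coeff_single_of_ne hi, zero_mul]

theorem mem_center_iff_coeff (hmul : IsSkewLaurentMul φ e) (x : L) :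
    x ∈ Subring.center L ↔
      ∀ n : ℤ, φ ((e x).coeff n) = (e x).coeff n ∧
        ∀ b : D, (e x).coeff n * (φ ^ n) b = b * (e x).coeff n := by
  constructor
  · intro hx n
    have key : ∀ (m : ℤ) (b : D), (e x).coeff n * (φ ^ n) b = b * (φ ^ m) ((e x).coeff n) :=
      fun m b => by
        rw [← coeff_mul_single hmul, ← coeff_single_mul hmul, Subring.mem_center_iff.mp hx]
    refine ⟨?_, fun b => key 0 b⟩
    simpa using (key 1 1).symm
  · intro h
    refine Subring.mem_center_iff.mpr fun y => e.injective (HahnSeries.ext (funext fun n => ?_))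
    have hyx : ∀ i, (e y).coeff i * (φ ^ i) ((e x).coeff (n - i)) =
        (e y).coeff (n - (n - i)) * (e x).coeff (n - i) := fun i => by
      rw [RingEquiv.zpow_apply_eq_self_s3 (h (n - i)).1, sub_sub_cancel]
    rw [hmul, hmul, finsum_congr hyx]
    exact (finsum_comp_equiv (Equiv.subLeft n)
      (f := fun j => (e y).coeff (n - j) * (e x).coeff j)).trans
        (finsum_congr fun i => ((h i).2 _).symm)

end SkewConvolution

theorem center_skewLaurentSeries_of_finite_order_general
    (D : Type*) [DivisionRing D] (φ : D ≃+* D)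
    (L : Type*) [DivisionRing L] (e : L ≃+ HahnSeries ℤ D)
    (hmul : ∀ x y : L, ∀ n : ℤ,
      (e (x * y)).coeff n = ∑ᶠ i : ℤ, (e x).coeff i * (φ ^ i) ((e y).coeff (n - i)))
    (hkF : ∀ a : D, φ a = a → (∀ b : D, φ b = b → a * b = b * a) →
      a ∈ Subring.center D)
    (s : ℕ) (hord : orderOf φ = s) :
    ∀ x : L, x ∈ Subring.center L ↔
      ∀ n : ℤ, (φ ((e x).coeff n) = (e x).coeff n ∧
          (∀ b : D, φ b = b → (e x).coeff n * b = b * (e x).coeff n)) ∧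
        ((e x).coeff n ≠ 0 → (s : ℤ) ∣ n) := by
  intro x
  rw [mem_center_iff_coeff hmul]
  refine forall_congr' fun n => ?_
  rw [fixed_and_twistedCommute_iff hkF, ← hord, orderOf_dvd_iff_zpow_eq_one]

/-- Let `D` be a division ring, `φ` a ring automorphism of `D`, with the center `k` of the fixed
division subring `K = {a | φ a = a}` contained in the center of `D`.  The skew Laurent series
division ring `D((λ, φ))` is presented as a division ring `L` additively identified with
`HahnSeries ℤ D` whose multiplication is the `φ`-twisted convolution.  If `φ` has finite order
`s`, then the center of `L` is `k((λ^s))`: a series is central iff all of its coefficients lie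
in `k` and its support is contained in the multiples of `s`. -/
theorem center_skewLaurentSeries_of_finite_order
    (D : Type*) [DivisionRing D] (φ : D ≃+* D)
    (L : Type*) [DivisionRing L] (e : L ≃+ HahnSeries ℤ D)
    (hmul : ∀ x y : L, ∀ n : ℤ,
      (e (x * y)).coeff n = ∑ᶠ i : ℤ, (e x).coeff i * (φ ^ i) ((e y).coeff (n - i)))
    (hone : e 1 = HahnSeries.C (1 : D))
    (hkF : ∀ a : D, φ a = a → (∀ b : D, φ b = b → a * b = b * a) →
      a ∈ Subring.center D)
    (s : ℕ) (hs : 0 < s) (hord : orderOf φ = s) :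
    ∀ x : L, x ∈ Subring.center L ↔
      ∀ n : ℤ, (φ ((e x).coeff n) = (e x).coeff n ∧
          (∀ b : D, φ b = b → (e x).coeff n * b = b * (e x).coeff n)) ∧
        ((e x).coeff n ≠ 0 → (s : ℤ) ∣ n) :=
  center_skewLaurentSeries_of_finite_order_general D φ L e hmul hkF s hord
end

section
/- Let D be a division ring with center F, and suppose a ∈ D satisfies a nonzero polynomial over F of degree at most n. Then for all b₁, …, bₙ ∈ D, Σ_{σ ∈ S_{n+1}} sign(σ) a^{σ(0)} b₁ a^{σ(1)} b₂ ⋯ bₙ a^{σ(n)} = 0, where S_{n+1} is the symmetric group on {0, 1, …, n}. -/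
/-- If `a ∈ D` satisfies a nonzero polynomial of degree at most `n` with coefficients in the
center `F` of the division ring `D`, then for all `b₁, …, bₙ ∈ D`,
`Σ_{σ ∈ S_{n+1}} sign(σ) a^{σ 0} b₁ a^{σ 1} ⋯ bₙ a^{σ n} = 0`. -/
theorem gPolynomial_vanish_of_algebraic_of_degree_le
    (D : Type*) [DivisionRing D] (n : ℕ) (a : D)
    (halg : ∃ p : Polynomial D, p ≠ 0 ∧ p.natDegree ≤ n ∧
      (∀ i, p.coeff i ∈ Subring.center D) ∧ Polynomial.eval a p = 0)
    (b : Fin n → D) :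
    ∑ σ : Equiv.Perm (Fin (n + 1)),
      (Equiv.Perm.sign σ : ℤ) •
        (a ^ ((σ 0 : Fin (n + 1)) : ℕ) *
          (List.ofFn fun i : Fin n => b i * a ^ ((σ i.succ : Fin (n + 1)) : ℕ)).prod) = 0 := by
  classical
  set F := Subring.center D with hF
  haveI : NoZeroSMulDivisors F D := by
    refine ⟨fun {r x} h => ?_⟩
    have h' : (r : D) * x = 0 := h
    rcases mul_eq_zero.mp h' with h0 | h0
    · exact Or.inl (by exact_mod_cast h0)
    · exact Or.inr h0
  -- the coefficient functions
  set c : Fin (n + 1) → D := Fin.cases 1 b with hc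
  -- the base multilinear map
  set g : MultilinearMap F (fun _ : Fin (n + 1) => D) D :=
    (MultilinearMap.mkPiAlgebraFin F (n + 1) D).compLinearMap
      (fun i => LinearMap.mulLeft F (c i)) with hg
  have hgapply : ∀ x : Fin (n + 1) → D,
      g x = (List.ofFn fun i => c i * x i).prod := fun x => rfl
  set v : Fin (n + 1) → D := fun i => a ^ (i : ℕ) with hv
  -- the family `v` is linearly dependent over the center
  obtain ⟨p, hp0, hdeg, hcent, heval⟩ := halg
  have hdep : ¬ LinearIndependent F v := by
    rw [Fintype.not_linearIndependent_iff]
    refine ⟨fun i => ⟨p.coeff i, hcent i⟩, ?_, ⟨p.natDegree, Nat.lt_succ_of_le hdeg⟩, ?_⟩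
    · have : ∑ i : Fin (n + 1), (⟨p.coeff i, hcent i⟩ : F) • v i
          = ∑ i ∈ Finset.range (n + 1), p.coeff i * a ^ i := by
        rw [Finset.sum_range fun i => p.coeff i * a ^ i]
        rfl
      rw [this, ← Polynomial.eval_eq_sum_range' (Nat.lt_succ_of_le hdeg), heval]
    · intro h
      have h2 : p.coeff p.natDegree = 0 := congrArg Subtype.val h
      exact Polynomial.leadingCoeff_ne_zero.mpr hp0 h2
  have key : (MultilinearMap.alternatization g) v = 0 :=
    AlternatingMap.map_linearDependent _ v hdep
  rw [MultilinearMap.alternatization_apply] at key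
  rw [← key]
  refine Finset.sum_congr rfl fun σ _ => ?_
  rw [Units.smul_def]
  congr 1
  rw [MultilinearMap.domDomCongr_apply, hgapply]
  have : (List.ofFn fun i : Fin (n + 1) => c i * v (σ i))
      = (c 0 * v (σ 0)) :: List.ofFn fun i : Fin n => c i.succ * v (σ i.succ) := by
    rw [List.ofFn_succ]
  rw [this, List.prod_cons]
  simp [hc, hv, Fin.cases_succ, Fin.cases_zero]
end

section
/- Let D be a division ring with center F and let a ∈ D. If for all b₁, …, bₙ ∈ D the identity Σ_{σ ∈ S_{n+1}} sign(σ) a^{σ(0)} b₁ a^{σ(1)} ⋯ bₙ a^{σ(n)} = 0 holds, then a is algebraic over F of degree at most n. -/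
/-!
If `1, a, …, aⁿ` were linearly independent over the center `F`, the alternating sum would not
vanish identically. The key fact is that for `u₀, …, u_m` independent over `F`, an identity
`∑ uᵢ x dᵢ = 0` for all `x ∈ D` forces every `dᵢ = 0`: normalising one coefficient to `1` and
commuting with an arbitrary `y` yields a shorter identity, so by induction all normalised
coefficients are central, contradicting independence. Expanding the alternating sum along `σ 0`
turns it into such an identity in the first variable `b₁`, which gives non-vanishing by induction
on `n`.
-/

open Polynomial

theorem exists_aeval_eq_zero_of_not_linearIndependent_pow {R A : Type*} [CommRing R] [Ring A]
    [Algebra R A] {a : A} {n : ℕ}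
    (h : ¬LinearIndependent R fun i : Fin (n + 1) => a ^ (i : ℕ)) :
    ∃ p : R[X], p ≠ 0 ∧ p.natDegree ≤ n ∧ aeval a p = 0 := by
  obtain ⟨g, hg, i, hi⟩ := Fintype.not_linearIndependent_iff.mp h
  have hcoeff : (∑ k : Fin (n + 1), monomial (k : ℕ) (g k)).coeff i = g i := by
    simp [coeff_monomial, Fin.val_inj]
  refine ⟨∑ k : Fin (n + 1), monomial (k : ℕ) (g k), fun h0 => hi ?_, ?_, ?_⟩
  · simpa [h0] using hcoeff.symm
  · exact natDegree_sum_le_of_forall_le _ _ fun k _ => (natDegree_monomial_le _).trans k.is_le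
  · simpa [map_sum, aeval_monomial, Algebra.smul_def] using hg

section DivisionRing

variable {D : Type*} [DivisionRing D]

theorem LinearIndependent.eq_zero_of_forall_sum_mul_mul_eq_zero {m : ℕ} {u d : Fin m → D}
    (hu : LinearIndependent (Subring.center D) u) (h : ∀ x, ∑ i, u i * x * d i = 0) : d = 0 := by
  induction m with
  | zero => exact Subsingleton.elim _ _
  | succ m ih =>
    have drop_last : ∀ d' : Fin (m + 1) → D, d' (Fin.last m) = 0 →
        (∀ x, ∑ i, u i * x * d' i = 0) → d' = 0 := by
      intro d' hlast hd'
      have hinit := ih (hu.comp _ (Fin.castSucc_injective m)) (d := d' ∘ Fin.castSucc) fun x => by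
        simpa [Fin.sum_univ_castSucc, hlast] using hd' x
      ext i
      induction i using Fin.lastCases with
      | last => exact hlast
      | cast j => exact congrFun hinit j
    by_cases hlast : d (Fin.last m) = 0
    · exact drop_last d hlast h
    exfalso
    set e : Fin (m + 1) → D := fun i => d i * (d (Fin.last m))⁻¹ with he
    have he_last : e (Fin.last m) = 1 := mul_inv_cancel₀ hlast
    have he_sum : ∀ x, ∑ i, u i * x * e i = 0 := fun x => by
      simp only [he, ← mul_assoc, ← Finset.sum_mul, h, zero_mul]
    have he_comm : ∀ i y, e i * y = y * e i := by
      intro i y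
      have hcomm := drop_last (fun i => e i * y - y * e i) (by simp [he_last]) fun x => by
        have hxy := he_sum (x * y)
        have hx := congrArg (· * y) (he_sum x)
        simp only [Finset.sum_mul, zero_mul] at hx
        simp only [mul_sub, Finset.sum_sub_distrib, ← mul_assoc] at hxy ⊢
        rw [hx, hxy, sub_zero]
      exact sub_eq_zero.mp (congrFun hcomm i)
    have he_mem : ∀ i, e i ∈ Subring.center D :=
      fun i => Subring.mem_center_iff.mpr fun y => (he_comm i y).symm
    have hdep := Fintype.linearIndependent_iff.mp hu (fun i => ⟨e i, he_mem i⟩) (by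
      simpa [Subring.smul_def, he_comm] using he_sum 1) (Fin.last m)
    simp [Subtype.ext_iff, he_last] at hdep

def capelli (n : ℕ) (u : Fin (n + 1) → D) (b : Fin n → D) : D :=
  ∑ σ : Equiv.Perm (Fin (n + 1)),
    (Equiv.Perm.sign σ : ℤ) • (u (σ 0) * (List.ofFn fun i : Fin n => b i * u (σ i.succ)).prod)

theorem capelli_succ_cons (n : ℕ) (u : Fin (n + 2) → D) (x : D) (b : Fin n → D) :
    capelli (n + 1) u (Fin.cons x b) = ∑ p : Fin (n + 2), u p * x *
      ((if p = 0 then (1 : ℤ) else -1) • capelli n (fun j => u (Equiv.swap 0 p j.succ)) b) := by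
  rw [capelli, ← Equiv.Perm.decomposeFin.symm.sum_comp, Fintype.sum_prod_type]
  refine Finset.sum_congr rfl fun p _ => ?_
  rw [capelli, Finset.smul_sum, Finset.mul_sum]
  refine Finset.sum_congr rfl fun σ _ => ?_
  simp only [Equiv.Perm.decomposeFin.symm_sign, Equiv.Perm.decomposeFin_symm_apply_zero,
    Equiv.Perm.decomposeFin_symm_apply_succ, List.ofFn_succ, List.prod_cons, Fin.cons_zero,
    Fin.cons_succ, Units.val_mul, apply_ite (fun z : ℤˣ => (z : ℤ)), Units.val_one,
    Units.val_neg, mul_smul, mul_smul_comm, mul_assoc]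

theorem capelli_zero (u : Fin 1 → D) (b : Fin 0 → D) : capelli 0 u b = u 0 := by
  simp [capelli, Subsingleton.elim _ (1 : Equiv.Perm (Fin 1))]

theorem LinearIndependent.exists_capelli_ne_zero {n : ℕ} {u : Fin (n + 1) → D}
    (hu : LinearIndependent (Subring.center D) u) : ∃ b, capelli n u b ≠ 0 := by
  induction n with
  | zero => exact ⟨Fin.elim0, by simpa [capelli_zero] using hu.ne_zero 0⟩
  | succ n ih =>
    obtain ⟨b, hb⟩ := ih (hu.comp _ (Fin.succ_injective _))
    by_contra! hzero
    -- expanding along `σ 0` exhibits an identity `∑ u p x d p = 0` whose coefficient at `p = 0`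
    -- is the nonzero `capelli n (u ∘ Fin.succ) b`
    have hd := hu.eq_zero_of_forall_sum_mul_mul_eq_zero fun x => by
      rw [← capelli_succ_cons, hzero (Fin.cons x b)]
    exact hb (by simpa [Function.comp_def] using congrFun hd 0)

end DivisionRing

/-- If for all `b₁, …, bₙ ∈ D` the identity
`Σ_{σ ∈ S_{n+1}} sign(σ) a^{σ 0} b₁ a^{σ 1} ⋯ bₙ a^{σ n} = 0` holds, then `a` is algebraic of
degree at most `n` over the center `F` of the division ring `D`. -/
theorem algebraic_of_degree_le_of_gPolynomial_vanish
    (D : Type*) [DivisionRing D] (n : ℕ) (a : D)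
    (hvan : ∀ b : Fin n → D,
      ∑ σ : Equiv.Perm (Fin (n + 1)),
        (Equiv.Perm.sign σ : ℤ) •
          (a ^ ((σ 0 : Fin (n + 1)) : ℕ) *
            (List.ofFn fun i : Fin n => b i * a ^ ((σ i.succ : Fin (n + 1)) : ℕ)).prod) = 0) :
    ∃ p : Polynomial D, p ≠ 0 ∧ p.natDegree ≤ n ∧
      (∀ i, p.coeff i ∈ Subring.center D) ∧ Polynomial.eval a p = 0 := by
  by_contra hnot
  have hind : LinearIndependent (Subring.center D) fun i : Fin (n + 1) => a ^ (i : ℕ) := by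
    by_contra hdep
    obtain ⟨p, hp0, hpn, hpa⟩ := exists_aeval_eq_zero_of_not_linearIndependent_pow hdep
    refine hnot ⟨p.map (algebraMap (Subring.center D) D), ?_, natDegree_map_le.trans hpn,
      fun i => by rw [coeff_map]; exact (p.coeff i).2, by rwa [eval_map_algebraMap]⟩
    exact (Polynomial.map_ne_zero_iff (FaithfulSMul.algebraMap_injective _ _)).mpr hp0
  obtain ⟨b, hb⟩ := hind.exists_capelli_ne_zero
  exact hb (hvan b)
end

section
/- Let D be a division ring with finite center F, and let a, b ∈ D be elements algebraic over F with ab ≠ ba. Then the F-subalgebra F[a,b] generated by a and b cannot be finite; equivalently, if F[a,b] is finite then ab = ba. -/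
theorem Subring.mul_comm_of_finite {D : Type*} [DivisionRing D] {R : Subring D}
    (hR : (R : Set D).Finite) {x y : D} (hx : x ∈ R) (hy : y ∈ R) : x * y = y * x := by
  have : Finite R := hR.to_subtype
  -- Wedderburn's little theorem: the finite domain `R` is a field.
  have hcomm := (Finite.isDomain_to_isField R).mul_comm (⟨x, hx⟩ : R) ⟨y, hy⟩
  exact congrArg Subtype.val hcomm

theorem subring_gen_not_finite_of_not_commute_general
    (D : Type*) [DivisionRing D]
    (a b : D)
    (hab : a * b ≠ b * a) :
    ¬ ((Subring.closure ((Subring.center D : Set D) ∪ {a, b}) : Set D).Finite) := fun hfin =>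
  hab <| Subring.mul_comm_of_finite hfin
    (Subring.subset_closure (Or.inr (Set.mem_insert a {b})))
    (Subring.subset_closure (Or.inr (Set.mem_insert_of_mem a rfl)))

/-- Let `D` be a division ring with finite center `F` and `a, b ∈ D` algebraic over `F` with
`ab ≠ ba`.  Then the `F`-subalgebra `F[a,b]` generated by `a` and `b` is not finite. -/
theorem subring_gen_not_finite_of_not_commute
    (D : Type*) [DivisionRing D] (hF : (Subring.center D : Set D).Finite)
    (a b : D)
    (ha : ∃ p : Polynomial D, p ≠ 0 ∧ (∀ i, p.coeff i ∈ Subring.center D) ∧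
      Polynomial.eval a p = 0)
    (hb : ∃ p : Polynomial D, p ≠ 0 ∧ (∀ i, p.coeff i ∈ Subring.center D) ∧
      Polynomial.eval b p = 0)
    (hab : a * b ≠ b * a) :
    ¬ ((Subring.closure ((Subring.center D : Set D) ∪ {a, b}) : Set D).Finite) :=
  subring_gen_not_finite_of_not_commute_general D a b hab
end

section
/- Let F be a finite field contained in the center of a division ring D, and let a, b ∈ D* with aba⁻¹b⁻¹ ∈ F. If aba⁻¹b⁻¹ ≠ 1, then at least one of aⁿ, bⁿ is not algebraic over F, where n is the multiplicative order of aba⁻¹b⁻¹; in particular a or b is not algebraic over F. -/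
/-- pigeonhole: a nonzero element with finitely many powers has finite order. -/
private lemma aux_finord {D : Type*} [DivisionRing D] {x : D} (hx : x ≠ 0)
    (h : (Set.range (fun i : ℕ => x ^ i)).Finite) : ∃ k, 0 < k ∧ x ^ k = 1 := by
  have hni : ¬ Function.Injective (fun i : ℕ => x ^ i) := by
    intro hinj
    exact (Set.infinite_range_of_injective hinj) h
  rw [Function.not_injective_iff] at hni
  obtain ⟨i, j, hij, hne⟩ := hni
  rcases hne.lt_or_gt with hlt | hlt
  · refine ⟨j - i, Nat.sub_pos_of_lt hlt, ?_⟩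
    have h1 : x ^ i * x ^ (j - i) = x ^ i * 1 := by
      rw [← pow_add, Nat.add_sub_cancel' hlt.le, mul_one, hij]
    exact mul_left_cancel₀ (pow_ne_zero i hx) h1
  · refine ⟨i - j, Nat.sub_pos_of_lt hlt, ?_⟩
    have h1 : x ^ j * x ^ (i - j) = x ^ j * 1 := by
      rw [← pow_add, Nat.add_sub_cancel' hlt.le, mul_one, hij]
    exact mul_left_cancel₀ (pow_ne_zero j hx) h1

/-- spans of finite sets over a finite subfield are finite sets -/
private lemma aux_span_finite {D : Type*} [DivisionRing D] (F : Subfield D)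
    (hFfin : (F : Set D).Finite) {S : Set D} (hS : S.Finite) :
    ((Submodule.span F S : Submodule F D) : Set D).Finite := by
  haveI : Finite F := hFfin.to_subtype
  haveI : Module.Finite F (Submodule.span F S) := Module.Finite.iff_fg.mpr (Submodule.fg_span hS)
  haveI : Finite (Submodule.span F S) := Module.finite_of_finite F
  exact (Submodule.span F S : Set D).toFinite

/-- A nonzero element algebraic over a finite central subfield has finite order. -/
private lemma aux_alg_finord {D : Type*} [DivisionRing D] (F : Subfield D)
    (hFfin : (F : Set D).Finite) (hFc : (F : Set D) ⊆ (Subring.center D : Set D))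
    {x : D} (hx : x ≠ 0)
    (halg : ∃ p : Polynomial D, p ≠ 0 ∧ (∀ i, p.coeff i ∈ F) ∧ Polynomial.eval x p = 0) :
    ∃ k, 0 < k ∧ x ^ k = 1 := by
  obtain ⟨p, hp0, hpc, hpe⟩ := halg
  set d := p.natDegree with hd
  have hdpos : 0 < d := by
    rcases Nat.eq_zero_or_pos d with h0 | h
    · exfalso
      rw [hd] at h0
      have hpC := Polynomial.eq_C_of_natDegree_eq_zero h0
      have hx0 : p.eval x = p.coeff 0 := by rw [hpC]; simp
      rw [hpe] at hx0
      exact hp0 (by rw [hpC, ← hx0, map_zero])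
    · exact h
  set S : Set D := (fun i : ℕ => x ^ i) '' Set.Iio d with hS
  set V : Submodule F D := Submodule.span F S with hV
  have hcomm : ∀ c : D, c ∈ F → ∀ y : D, y * c = c * y := by
    intro c hc y
    exact Subring.mem_center_iff.mp (hFc hc) y
  -- x ^ d ∈ V
  have hc : p.coeff d ≠ 0 := by
    rw [hd, ← Polynomial.leadingCoeff]
    exact Polynomial.leadingCoeff_ne_zero.mpr hp0
  have hxd : x ^ d ∈ V := by
    have hsum : ∑ i ∈ Finset.range d, p.coeff i * x ^ i + p.coeff d * x ^ d = 0 := by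
      rw [← Finset.sum_range_succ, ← Polynomial.eval_eq_sum_range, hpe]
    have hxd_eq : x ^ d = ∑ i ∈ Finset.range d, -((p.coeff d)⁻¹ * p.coeff i) * x ^ i := by
      have h1 : p.coeff d * x ^ d = -∑ i ∈ Finset.range d, p.coeff i * x ^ i := by
        linear_combination (norm := noncomm_ring) hsum
      have h2 : x ^ d = (p.coeff d)⁻¹ * (p.coeff d * x ^ d) := by
        rw [← mul_assoc, inv_mul_cancel₀ hc, one_mul]
      rw [h2, h1, mul_neg, Finset.mul_sum, ← Finset.sum_neg_distrib]
      apply Finset.sum_congr rfl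
      intro i _
      rw [neg_mul, mul_assoc]
    rw [hxd_eq]
    apply Submodule.sum_mem
    intro i hi
    have hmem : (-((p.coeff d)⁻¹ * p.coeff i)) ∈ F :=
      neg_mem (mul_mem (inv_mem (hpc d)) (hpc i))
    have heq : (-((p.coeff d)⁻¹ * p.coeff i)) * x ^ i
        = (⟨-((p.coeff d)⁻¹ * p.coeff i), hmem⟩ : F) • x ^ i := rfl
    rw [heq]
    exact Submodule.smul_mem V _ (Submodule.subset_span ⟨i, Finset.mem_range.mp hi, rfl⟩)
  -- V is stable under left multiplication by x
  have hstab : ∀ v ∈ V, x * v ∈ V := by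
    intro v hv
    induction hv using Submodule.span_induction with
    | mem y hy =>
        obtain ⟨i, hi, rfl⟩ := hy
        show x * x ^ i ∈ V
        rw [← pow_succ']
        rcases Nat.lt_or_ge (i + 1) d with h | h
        · exact Submodule.subset_span ⟨i + 1, h, rfl⟩
        · have hde : i + 1 = d := le_antisymm hi h
          rw [hde]; exact hxd
    | zero => rw [mul_zero]; exact V.zero_mem
    | add y z _ _ hy hz => rw [mul_add]; exact V.add_mem hy hz
    | smul c y _ hy =>
        have : x * (c • y) = c • (x * y) := by
          show x * ((c : D) * y) = (c : D) * (x * y)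
          rw [← mul_assoc, hcomm (c : D) c.2 x, mul_assoc]
        rw [this]
        exact V.smul_mem c hy
  -- every power of x lies in V
  have hpow : ∀ i : ℕ, x ^ i ∈ V := by
    intro i
    induction i with
    | zero => exact Submodule.subset_span ⟨0, hdpos, by simp⟩
    | succ i ih => rw [pow_succ', ]; exact hstab _ ih
  have hVfin : ((V : Submodule F D) : Set D).Finite :=
    aux_span_finite F hFfin ((Set.finite_Iio d).image _)
  exact aux_finord hx (hVfin.subset (by rintro y ⟨i, rfl⟩; exact hpow i))

/-- key lemma: if both `a` and `b` have finite multiplicative order, the commutator is 1. -/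
private lemma aux_key {D : Type*} [DivisionRing D] (F : Subfield D)
    (hFfin : (F : Set D).Finite) (hFc : (F : Set D) ⊆ (Subring.center D : Set D))
    (a b : D) (ha : a ≠ 0) (hb : b ≠ 0)
    (hαF : a * b * a⁻¹ * b⁻¹ ∈ F)
    {k m : ℕ} (hk : 0 < k) (hm : 0 < m) (hak : a ^ k = 1) (hbm : b ^ m = 1) :
    a * b * a⁻¹ * b⁻¹ = 1 := by
  by_contra hα1
  set α : D := a * b * a⁻¹ * b⁻¹ with hα
  have hα0 : α ≠ 0 :=
    mul_ne_zero (mul_ne_zero (mul_ne_zero ha hb) (inv_ne_zero ha)) (inv_ne_zero hb)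
  have hcomm : ∀ c : D, c ∈ F → ∀ y : D, y * c = c * y := fun c hc y =>
    Subring.mem_center_iff.mp (hFc hc) y
  -- α has finite order
  obtain ⟨e, he, hαe⟩ : ∃ e, 0 < e ∧ α ^ e = 1 := by
    apply aux_finord hα0
    apply hFfin.subset
    rintro y ⟨i, rfl⟩
    exact pow_mem hαF i
  have hswap : ∀ (s : ℕ) (y : D), y * α ^ s = α ^ s * y := fun s y => hcomm _ (pow_mem hαF s) y
  have hswap' : ∀ (s : ℕ) (y z : D), y * (α ^ s * z) = α ^ s * (y * z) := by
    intro s y z; rw [← mul_assoc, hswap, mul_assoc]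
  -- basic commutation relations
  have hab : a * b = α * (b * a) := by
    have : α * (b * a) = a * b := by
      calc α * (b * a) = a * b * a⁻¹ * (b⁻¹ * (b * a)) := by rw [hα, mul_assoc]
      _ = a * b * a⁻¹ * a := by rw [inv_mul_cancel_left₀ hb]
      _ = a * b * (a⁻¹ * a) := by rw [mul_assoc]
      _ = a * b := by rw [inv_mul_cancel₀ ha, mul_one]
    exact this.symm
  have hba : b * a = α ^ (e - 1) * (a * b) := by
    have h2 : α ^ (e - 1) * (a * b) = α ^ (e - 1) * α * (b * a) := by
      rw [hab, ← mul_assoc]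
    rw [h2, ← pow_succ, Nat.sub_add_cancel he, hαe, one_mul]
  have hba' : ∀ z : D, b * (a * z) = α ^ (e - 1) * (a * (b * z)) := by
    intro z
    rw [← mul_assoc, hba, mul_assoc, mul_assoc]
  have hbau' : ∀ (u : ℕ) (z : D), b * (a ^ u * z) = α ^ ((e - 1) * u) * (a ^ u * (b * z)) := by
    intro u
    induction u with
    | zero => intro z; simp
    | succ u ih =>
        intro z
        calc b * (a ^ (u + 1) * z) = b * (a * (a ^ u * z)) := by rw [pow_succ', mul_assoc]
        _ = α ^ (e - 1) * (a * (b * (a ^ u * z))) := hba' _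
        _ = α ^ (e - 1) * (a * (α ^ ((e - 1) * u) * (a ^ u * (b * z)))) := by rw [ih]
        _ = α ^ (e - 1) * (α ^ ((e - 1) * u) * (a * (a ^ u * (b * z)))) := by
              rw [hswap' ((e - 1) * u) a]
        _ = α ^ ((e - 1) * (u + 1)) * (a ^ (u + 1) * (b * z)) := by
              rw [Nat.mul_succ, Nat.add_comm ((e - 1) * u), pow_add, pow_succ']
              simp only [mul_assoc]
  have hbja' : ∀ (j u : ℕ) (z : D),
      b ^ j * (a ^ u * z) = α ^ ((e - 1) * u * j) * (a ^ u * (b ^ j * z)) := by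
    intro j
    induction j with
    | zero => intro u z; simp
    | succ j ih =>
        intro u z
        calc b ^ (j + 1) * (a ^ u * z) = b ^ j * (b * (a ^ u * z)) := by
              rw [pow_succ, mul_assoc]
        _ = b ^ j * (α ^ ((e - 1) * u) * (a ^ u * (b * z))) := by rw [hbau']
        _ = α ^ ((e - 1) * u) * (b ^ j * (a ^ u * (b * z))) := by rw [hswap']
        _ = α ^ ((e - 1) * u) * (α ^ ((e - 1) * u * j) * (a ^ u * (b ^ j * (b * z)))) := by
              rw [ih]
        _ = α ^ ((e - 1) * u * (j + 1)) * (a ^ u * (b ^ (j + 1) * z)) := by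
              rw [Nat.mul_succ, Nat.add_comm ((e - 1) * u * j), pow_add, pow_succ]
              simp only [mul_assoc]
  -- the set of monomials
  set f : ℕ × ℕ × ℕ → D := fun t => α ^ t.1 * a ^ t.2.1 * b ^ t.2.2 with hf
  set Sf : Set D := Set.range f with hSf
  have hSfin : Sf.Finite := by
    have hsub : Sf ⊆ f '' (Set.Iio e ×ˢ Set.Iio k ×ˢ Set.Iio m) := by
      rintro y ⟨⟨s, i, j⟩, rfl⟩
      refine ⟨(s % e, i % k, j % m), ⟨Nat.mod_lt _ he, Nat.mod_lt _ hk, Nat.mod_lt _ hm⟩, ?_⟩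
      show α ^ (s % e) * a ^ (i % k) * b ^ (j % m) = α ^ s * a ^ i * b ^ j
      rw [← pow_eq_pow_mod s hαe, ← pow_eq_pow_mod i hak, ← pow_eq_pow_mod j hbm]
    exact Set.Finite.subset
      (Set.Finite.image f (((Set.finite_Iio e).prod
        (((Set.finite_Iio k)).prod (Set.finite_Iio m))))) hsub
  have hone : (1 : D) ∈ Sf := ⟨(0, 0, 0), by simp [hf]⟩
  have haS : a ∈ Sf := ⟨(0, 1, 0), by simp [hf]⟩
  have hbS : b ∈ Sf := ⟨(0, 0, 1), by simp [hf]⟩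
  have hmulS : ∀ y ∈ Sf, ∀ z ∈ Sf, y * z ∈ Sf := by
    rintro y ⟨⟨s, i, j⟩, rfl⟩ z ⟨⟨t, u, v⟩, rfl⟩
    refine ⟨(s + t + (e - 1) * u * j, i + u, j + v), ?_⟩
    show α ^ (s + t + (e - 1) * u * j) * a ^ (i + u) * b ^ (j + v)
        = (α ^ s * a ^ i * b ^ j) * (α ^ t * a ^ u * b ^ v)
    have hR : (α ^ s * a ^ i * b ^ j) * (α ^ t * a ^ u * b ^ v)
        = α ^ s * (α ^ t * (α ^ ((e - 1) * u * j) * (a ^ i * (a ^ u * (b ^ j * b ^ v))))) := by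
      simp only [mul_assoc]
      rw [hswap' t (b ^ j), hswap' t (a ^ i), hbja' j u (b ^ v), hswap' ((e - 1) * u * j) (a ^ i)]
      rw [Nat.mul_assoc]
    rw [hR]
    simp only [pow_add, mul_assoc]
  -- the span of the monomials over F
  set V : Submodule F D := Submodule.span F Sf with hV
  have hVfin : ((V : Submodule F D) : Set D).Finite := aux_span_finite F hFfin hSfin
  have hVmul : ∀ y ∈ V, ∀ z ∈ V, y * z ∈ V := by
    intro y hy
    induction hy using Submodule.span_induction with
    | mem y₀ hy₀ =>
        intro z hz
        induction hz using Submodule.span_induction with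
        | mem z₀ hz₀ => exact Submodule.subset_span (hmulS _ hy₀ _ hz₀)
        | zero => rw [mul_zero]; exact V.zero_mem
        | add z₁ z₂ _ _ h1 h2 => rw [mul_add]; exact V.add_mem h1 h2
        | smul c z₁ _ h1 =>
            have : y₀ * (c • z₁) = c • (y₀ * z₁) := by
              show y₀ * ((c : D) * z₁) = (c : D) * (y₀ * z₁)
              rw [← mul_assoc, hcomm (c : D) c.2 y₀, mul_assoc]
            rw [this]
            exact V.smul_mem c h1
    | zero => intro z hz; rw [zero_mul]; exact V.zero_mem
    | add y₁ y₂ _ _ h1 h2 =>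
        intro z hz
        rw [add_mul]; exact V.add_mem (h1 z hz) (h2 z hz)
    | smul c y₁ _ h1 =>
        intro z hz
        have : (c • y₁) * z = c • (y₁ * z) := by
          show ((c : D) * y₁) * z = (c : D) * (y₁ * z)
          rw [mul_assoc]
        rw [this]
        exact V.smul_mem c (h1 z hz)
  -- V is a subring
  set R : Subring D :=
    { carrier := (V : Set D)
      one_mem' := Submodule.subset_span hone
      mul_mem' := fun hy hz => hVmul _ hy _ hz
      zero_mem' := V.zero_mem
      add_mem' := fun hy hz => V.add_mem hy hz
      neg_mem' := fun hy => V.neg_mem hy } with hR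
  have haV : a ∈ R := Submodule.subset_span haS
  have hbV : b ∈ R := Submodule.subset_span hbS
  -- R is a finite domain, hence a field by Wedderburn
  haveI : Finite R := hVfin.to_subtype
  haveI : Fintype R := Fintype.ofFinite R
  classical
  letI : DivisionRing R := Fintype.divisionRingOfIsDomain R
  letI : Field R := littleWedderburn R
  have hcm : (⟨a, haV⟩ : R) * ⟨b, hbV⟩ = ⟨b, hbV⟩ * ⟨a, haV⟩ := mul_comm _ _
  have habba : a * b = b * a := congrArg Subtype.val hcm
  apply hα1
  rw [hα, habba, mul_assoc b a, mul_inv_cancel₀ ha, mul_one, mul_inv_cancel₀ hb]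

/-- Let `F` be a finite subfield contained in the center of a division ring `D`, and
`a, b ∈ D*` with `α = aba⁻¹b⁻¹ ∈ F`, `α ≠ 1`, of multiplicative order `n`.  Then at least
one of `aⁿ`, `bⁿ` is not algebraic over `F`; in particular `a` or `b` is not algebraic
over `F`. -/
theorem not_algebraic_of_noncentral_commutator
    (D : Type*) [DivisionRing D] (F : Subfield D) (hFfin : (F : Set D).Finite)
    (hFc : (F : Set D) ⊆ (Subring.center D : Set D))
    (a b : D) (ha : a ≠ 0) (hb : b ≠ 0)
    (hαF : a * b * a⁻¹ * b⁻¹ ∈ F) (hα1 : a * b * a⁻¹ * b⁻¹ ≠ 1)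
    (n : ℕ) (hn : n = orderOf (a * b * a⁻¹ * b⁻¹)) :
    (¬ (∃ p : Polynomial D, p ≠ 0 ∧ (∀ i, p.coeff i ∈ F) ∧
          Polynomial.eval (a ^ n) p = 0) ∨
       ¬ (∃ p : Polynomial D, p ≠ 0 ∧ (∀ i, p.coeff i ∈ F) ∧
          Polynomial.eval (b ^ n) p = 0)) ∧
    (¬ (∃ p : Polynomial D, p ≠ 0 ∧ (∀ i, p.coeff i ∈ F) ∧
          Polynomial.eval a p = 0) ∨
       ¬ (∃ p : Polynomial D, p ≠ 0 ∧ (∀ i, p.coeff i ∈ F) ∧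
          Polynomial.eval b p = 0)) := by
  have hα0 : a * b * a⁻¹ * b⁻¹ ≠ 0 :=
    mul_ne_zero (mul_ne_zero (mul_ne_zero ha hb) (inv_ne_zero ha)) (inv_ne_zero hb)
  obtain ⟨e, he, hαe⟩ : ∃ e, 0 < e ∧ (a * b * a⁻¹ * b⁻¹) ^ e = 1 := by
    apply aux_finord hα0
    apply hFfin.subset
    rintro y ⟨i, rfl⟩
    exact pow_mem hαF i
  have hnpos : 0 < n := by
    rw [hn]
    exact orderOf_pos_iff.mpr (isOfFinOrder_iff_pow_eq_one.mpr ⟨e, he, hαe⟩)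
  constructor
  · by_contra hcon
    push_neg at hcon
    obtain ⟨k, hk, hk1⟩ := aux_alg_finord F hFfin hFc (pow_ne_zero n ha) hcon.1
    obtain ⟨l, hl, hl1⟩ := aux_alg_finord F hFfin hFc (pow_ne_zero n hb) hcon.2
    rw [← pow_mul] at hk1 hl1
    exact hα1 (aux_key F hFfin hFc a b ha hb hαF
      (Nat.mul_pos hnpos hk) (Nat.mul_pos hnpos hl) hk1 hl1)
  · by_contra hcon
    push_neg at hcon
    obtain ⟨k, hk, hk1⟩ := aux_alg_finord F hFfin hFc ha hcon.1
    obtain ⟨l, hl, hl1⟩ := aux_alg_finord F hFfin hFc hb hcon.2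
    exact hα1 (aux_key F hFfin hFc a b ha hb hαF hk hl hk1 hl1)
end
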